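/- (One-step descent inequality for biased SGD on smooth functions) Let ℓ: ℝ^d → ℝ be L-smooth, let w⁺ = w − η·d where the random direction d satisfies ‖E[d] − ∇ℓ(w)‖² ≤ 2δ₁² + 2δ₂‖∇ℓ(w)‖² + 2ε² and E‖d‖² ≤ 4ε² + 4(δ₁² + σ₁²) + (2 + 4δ₂ + 4σ₂)‖∇ℓ(w)‖². If δ₂ ≤ 1/8 and η ≤ 1/(8L(1 + 2σ₂ + 2δ₂)), then E[ℓ(w⁺)] ≤ ℓ(w) − (η/4)‖∇ℓ(w)‖² + η(δ₁² + ε²) + 2Lη²(ε² + δ₁² + σ₁²). -/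

import Mathlib

open MeasureTheory

set_option maxHeartbeats 1000000 in
/-- One-step descent inequality for biased SGD on `L`-smooth functions:
if `w⁺ = w − η·d` with biased/noisy direction `d` satisfying the stated
bias and second-moment bounds, `δ₂ ≤ 1/8`, and
`η ≤ 1/(8L(1 + 2σ₂ + 2δ₂))`, then
`E[ℓ(w⁺)] ≤ ℓ(w) − (η/4)‖∇ℓ(w)‖² + η(δ₁² + ε²) + 2Lη²(ε² + δ₁² + σ₁²)`. -/
theorem stmt_17 {k : ℕ} {Ω : Type*} [MeasureSpace Ω]
    [IsProbabilityMeasure (volume : Measure Ω)]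
    (ℓ : EuclideanSpace ℝ (Fin k) → ℝ) (gradℓ : EuclideanSpace ℝ (Fin k) → EuclideanSpace ℝ (Fin k))
    (L : ℝ) (hL : 0 < L)
    (hsmooth : ∀ x y : EuclideanSpace ℝ (Fin k),
      ℓ y ≤ ℓ x + inner ℝ (gradℓ x) (y - x) + L / 2 * ‖y - x‖ ^ 2)
    (w : EuclideanSpace ℝ (Fin k)) (η δ₁ δ₂ σ₁ σ₂ ε : ℝ)
    (hη : 0 < η) (hδ₁ : 0 ≤ δ₁) (hδ₂ : 0 ≤ δ₂) (hσ₁ : 0 ≤ σ₁) (hσ₂ : 0 ≤ σ₂)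
    (hε : 0 ≤ ε)
    (d : Ω → EuclideanSpace ℝ (Fin k)) (hd : MemLp d 2 (volume : Measure Ω))
    (hint : Integrable (fun ω => ℓ (w - η • d ω)))
    (hbias : ‖(∫ ω, d ω) - gradℓ w‖ ^ 2 ≤
      2 * δ₁ ^ 2 + 2 * δ₂ * ‖gradℓ w‖ ^ 2 + 2 * ε ^ 2)
    (hmom : (∫ ω, ‖d ω‖ ^ 2) ≤
      4 * ε ^ 2 + 4 * (δ₁ ^ 2 + σ₁ ^ 2) + (2 + 4 * δ₂ + 4 * σ₂) * ‖gradℓ w‖ ^ 2)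
    (hδ₂' : δ₂ ≤ 1 / 8)
    (hη' : η ≤ 1 / (8 * L * (1 + 2 * σ₂ + 2 * δ₂))) :
    (∫ ω, ℓ (w - η • d ω)) ≤
      ℓ w - η / 4 * ‖gradℓ w‖ ^ 2 + η * (δ₁ ^ 2 + ε ^ 2)
        + 2 * L * η ^ 2 * (ε ^ 2 + δ₁ ^ 2 + σ₁ ^ 2) := by
  set g := gradℓ w with hg
  have hdint : Integrable d := hd.integrable one_le_two
  have hd2 : Integrable (fun ω => ‖d ω‖ ^ 2) := by
    have := hd.integrable_norm_rpow (by norm_num) (by norm_num)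
    simpa [Real.rpow_natCast, Real.rpow_two] using this
  -- pointwise bound from smoothness
  have hpt : ∀ ω, ℓ (w - η • d ω) ≤
      ℓ w + (-(η * inner ℝ g (d ω)) + L / 2 * η ^ 2 * ‖d ω‖ ^ 2) := by
    intro ω
    have hs := hsmooth w (w - η • d ω)
    have h1 : (w - η • d ω) - w = (-η) • d ω := by
      rw [neg_smul]; abel
    rw [h1, inner_smul_right, norm_smul, Real.norm_eq_abs, abs_neg, abs_of_pos hη] at hs
    calc ℓ (w - η • d ω) ≤ ℓ w + (-η) * inner ℝ g (d ω) + L / 2 * (η * ‖d ω‖) ^ 2 := hs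
      _ = ℓ w + (-(η * inner ℝ g (d ω)) + L / 2 * η ^ 2 * ‖d ω‖ ^ 2) := by ring
  have hlin' : Integrable (fun ω => -(η * inner ℝ g (d ω))) :=
    ((hdint.const_inner g).const_mul η).neg
  have hlin : Integrable (fun ω => -(η * inner ℝ g (d ω)) + L / 2 * η ^ 2 * ‖d ω‖ ^ 2) :=
    hlin'.add (hd2.const_mul (L / 2 * η ^ 2))
  have hrhsint : Integrable (fun ω =>
      ℓ w + (-(η * inner ℝ g (d ω)) + L / 2 * η ^ 2 * ‖d ω‖ ^ 2)) :=
    (integrable_const _).add hlin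
  have hI : (∫ ω, ℓ (w - η • d ω)) ≤
      ℓ w + (-(η * inner ℝ g (∫ ω, d ω)) + L / 2 * η ^ 2 * ∫ ω, ‖d ω‖ ^ 2) := by
    refine le_trans (integral_mono hint hrhsint hpt) (le_of_eq ?_)
    rw [integral_add (integrable_const _) hlin,
      integral_add hlin' (hd2.const_mul _),
      integral_neg, integral_const_mul, integral_const_mul, integral_const,
      integral_inner hdint]
    simp
  set E := ∫ ω, d ω with hE
  set M := ∫ ω, ‖d ω‖ ^ 2 with hM
  have hinner : ‖g‖ ^ 2 / 2 - (δ₁ ^ 2 + δ₂ * ‖g‖ ^ 2 + ε ^ 2) ≤ inner ℝ g E := by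
    have h1 : (inner ℝ g E : ℝ) = ‖g‖ ^ 2 + inner ℝ g (E - g) := by
      rw [inner_sub_right, real_inner_self_eq_norm_sq]; ring
    have h2 : |(inner ℝ g (E - g) : ℝ)| ≤ ‖g‖ * ‖E - g‖ := abs_real_inner_le_norm g (E - g)
    have h3 : ‖g‖ * ‖E - g‖ ≤ (‖g‖ ^ 2 + ‖E - g‖ ^ 2) / 2 := by
      nlinarith [sq_nonneg (‖g‖ - ‖E - g‖)]
    have h4 := abs_le.mp h2
    rw [h1]
    nlinarith [hbias]
  have hpos : 0 < 8 * L * (1 + 2 * σ₂ + 2 * δ₂) := by positivity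
  have hstep : L * η * (1 + 2 * σ₂ + 2 * δ₂) ≤ 1 / 8 := by
    rw [le_div_iff₀ hpos] at hη'
    nlinarith
  have hgnn : (0:ℝ) ≤ ‖g‖ ^ 2 := sq_nonneg _
  have e1 : η * (‖g‖ ^ 2 / 2 - (δ₁ ^ 2 + δ₂ * ‖g‖ ^ 2 + ε ^ 2)) ≤ η * inner ℝ g E :=
    mul_le_mul_of_nonneg_left hinner hη.le
  have e2 : L / 2 * η ^ 2 * M ≤ L / 2 * η ^ 2 *
      (4 * ε ^ 2 + 4 * (δ₁ ^ 2 + σ₁ ^ 2) + (2 + 4 * δ₂ + 4 * σ₂) * ‖g‖ ^ 2) :=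
    mul_le_mul_of_nonneg_left hmom (by positivity)
  have e3 : η * (L * η * (1 + 2 * σ₂ + 2 * δ₂) * ‖g‖ ^ 2) ≤ η * (1 / 8 * ‖g‖ ^ 2) :=
    mul_le_mul_of_nonneg_left (mul_le_mul_of_nonneg_right hstep hgnn) hη.le
  have e4 : η * (δ₂ * ‖g‖ ^ 2) ≤ η * (1 / 8 * ‖g‖ ^ 2) :=
    mul_le_mul_of_nonneg_left (mul_le_mul_of_nonneg_right hδ₂' hgnn) hη.le
  refine le_trans hI ?_
  nlinarith [e1, e2, e3, e4]
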